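/- arXiv:2112.13330 — 12 statements merged into one kernel-verified Lean document; each statement's English description precedes it below -/
import Mathlib

section
/- Self-adjointness of the symmetric estimate: if X ∈ A is self-adjoint (star(X) = X) and Q ∈ 𝒴 satisfies the symmetric orthogonal condition for X, then Q is self-adjoint φ-almost surely, i.e. φ(star(Q − star(Q)) · (Q − star(Q))) = 0. -/
/-- The pre-inner product ⟨X, Y⟩ := φ(star X * Y). -/
noncomputable def preInner {A : Type*} [Ring A] [StarRing A] [Algebra ℂ A]
    (φ : A →ₗ[ℂ] ℂ) (X Y : A) : ℂ := φ (star X * Y)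

/-- The symmetric pre-inner product ⟨⟨X, Y⟩⟩ := (1/2)·φ(star X * Y + Y * star X). -/
noncomputable def symInner {A : Type*} [Ring A] [StarRing A] [Algebra ℂ A]
    (φ : A →ₗ[ℂ] ℂ) (X Y : A) : ℂ := (1/2) * φ (star X * Y + Y * star X)

theorem symmetric_estimate_selfAdjoint
    {A : Type*} [Ring A] [StarRing A] [Algebra ℂ A] [StarModule ℂ A]
    (φ : A →ₗ[ℂ] ℂ)
    (hφ1 : φ 1 = 1)
    (hpos : ∀ x : A, ∃ r : ℝ, 0 ≤ r ∧ φ (star x * x) = (r : ℂ))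
    (hconj : ∀ x : A, φ (star x) = (starRingEnd ℂ) (φ x))
    (𝒴 : StarSubalgebra ℂ A)
    (hcomm : ∀ y ∈ 𝒴, ∀ z ∈ 𝒴, y * z = z * y)
    (X : A) (hX : star X = X)
    (Q : A) (hQ : Q ∈ 𝒴)
    (horth : ∀ Z ∈ 𝒴, symInner φ Z (X - Q) = 0) :
    φ (star (Q - star Q) * (Q - star Q)) = 0 := by
  set D := Q - star Q with hDdef
  have hQ' : star Q ∈ 𝒴 := star_mem hQ
  have hDmem : D ∈ 𝒴 := sub_mem hQ hQ'
  have hstarD : star D = -D := by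
    simp [hDdef, star_sub, neg_sub]
  have h1 := horth D hDmem
  unfold symInner at h1
  have h0 : φ (star D * (X - Q) + (X - Q) * star D) = 0 := by
    have h2 : (1/2 : ℂ) ≠ 0 := by norm_num
    exact (mul_eq_zero.mp h1).resolve_left h2
  have ha : φ (D * (X - Q) + (X - Q) * D) = 0 := by
    rw [hstarD] at h0
    have : φ (-(D * (X - Q) + (X - Q) * D)) = 0 := by
      rw [← h0]; congr 1; noncomm_ring
    rwa [map_neg, neg_eq_zero] at this
  have hb : φ ((X - star Q) * D + D * (X - star Q)) = 0 := by
    have h3 := hconj (D * (X - Q) + (X - Q) * D)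
    rw [ha, map_zero] at h3
    have h4 : star (D * (X - Q) + (X - Q) * D)
        = -((X - star Q) * D + D * (X - star Q)) := by
      simp only [star_add, star_mul, star_sub, hX, hstarD]
      noncomm_ring
    rw [h4, map_neg, neg_eq_zero] at h3
    exact h3
  have hc : φ (D * D + D * D) = 0 := by
    have h5 : φ ((X - star Q) * D + D * (X - star Q)
        - (D * (X - Q) + (X - Q) * D)) = 0 := by
      rw [map_sub, ha, hb, sub_zero]
    have h6 : (X - star Q) * D + D * (X - star Q)
        - (D * (X - Q) + (X - Q) * D) = D * D + D * D := by
      rw [hDdef]; noncomm_ring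
    rwa [h6] at h5
  rw [hstarD, neg_mul, map_neg, neg_eq_zero]
  have := hc
  rw [map_add] at this
  linear_combination this / 2
end

section
/- Skewness of the mean non-commutativity: if X ∈ A is self-adjoint (star(X) = X) and Q ∈ 𝒴 satisfies the skew orthogonal condition for X, then Q is skew-adjoint φ-almost surely, i.e. φ(star(Q + star(Q)) · (Q + star(Q))) = 0. -/
theorem skew_estimate_skewAdjoint
    {A : Type*} [Ring A] [StarRing A] [Algebra ℂ A] [StarModule ℂ A]
    (φ : A →ₗ[ℂ] ℂ)
    (hφ1 : φ 1 = 1)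
    (hpos : ∀ x : A, ∃ r : ℝ, 0 ≤ r ∧ φ (star x * x) = (r : ℂ))
    (hconj : ∀ x : A, φ (star x) = (starRingEnd ℂ) (φ x))
    (𝒴 : StarSubalgebra ℂ A)
    (hcomm : ∀ y ∈ 𝒴, ∀ z ∈ 𝒴, y * z = z * y)
    (X : A) (hX : star X = X)
    (Q : A) (hQ : Q ∈ 𝒴)
    (horth : ∀ Z ∈ 𝒴, φ (Z * X - X * Z) = 2 * φ (Q * Z)) :
    φ (star (Q + star Q) * (Q + star Q)) = 0 := by

  set S := Q + star Q with hSdef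
  have hS : star S = S := by simp [hSdef, add_comm]
  have hSmem : S ∈ 𝒴 := 𝒴.add_mem hQ (𝒴.star_mem' hQ)
  have key := horth S hSmem
  have h1 : (starRingEnd ℂ) (φ (S * X - X * S)) = - φ (S * X - X * S) := by
    rw [← hconj]
    have hst : star (S * X - X * S) = X * S - S * X := by
      simp [star_sub, star_mul, hS, hX]
    rw [hst, map_sub, map_sub]
    ring
  have h2 : (starRingEnd ℂ) (φ (Q * S)) = - φ (Q * S) := by
    rw [key] at h1
    have : (2 : ℂ) * (starRingEnd ℂ) (φ (Q * S)) = (2 : ℂ) * (- φ (Q * S)) := by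
      simpa [map_mul, mul_neg, Complex.conj_ofNat] using h1
    exact mul_left_cancel₀ (by norm_num : (2:ℂ) ≠ 0) this
  have h3 : φ (star Q * S) = (starRingEnd ℂ) (φ (Q * S)) := by
    have hc : star Q * S = S * star Q := hcomm _ (𝒴.star_mem' hQ) S hSmem
    have hst : star (Q * S) = S * star Q := by rw [star_mul, hS]
    rw [hc, ← hst, hconj]
  rw [hS]
  have : S * S = Q * S + star Q * S := by rw [hSdef, add_mul]
  rw [this, map_add, h3, h2]
  ring
end

section
/- For anti-self-adjoint estimands the roles are reversed: if X ∈ A satisfies star(X) = −X, then any Q ∈ 𝒴 satisfying the symmetric orthogonal condition for X is skew-adjoint φ-almost surely (φ(star(Q + star(Q)) · (Q + star(Q))) = 0), and any Q ∈ 𝒴 satisfying the skew orthogonal condition for X is self-adjoint φ-almost surely (φ(star(Q − star(Q)) · (Q − star(Q))) = 0). -/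
theorem anti_selfAdjoint_estimand_reversed_roles
    {A : Type*} [Ring A] [StarRing A] [Algebra ℂ A] [StarModule ℂ A]
    (φ : A →ₗ[ℂ] ℂ)
    (hφ1 : φ 1 = 1)
    (hpos : ∀ x : A, ∃ r : ℝ, 0 ≤ r ∧ φ (star x * x) = (r : ℂ))
    (hconj : ∀ x : A, φ (star x) = (starRingEnd ℂ) (φ x))
    (𝒴 : StarSubalgebra ℂ A)
    (hcomm : ∀ y ∈ 𝒴, ∀ z ∈ 𝒴, y * z = z * y)
    (X : A) (hX : star X = -X) :
    (∀ Q ∈ 𝒴, (∀ Z ∈ 𝒴, symInner φ Z (X - Q) = 0) →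
      φ (star (Q + star Q) * (Q + star Q)) = 0) ∧
    (∀ Q ∈ 𝒴, (∀ Z ∈ 𝒴, φ (Z * X - X * Z) = 2 * φ (Q * Z)) →
      φ (star (Q - star Q) * (Q - star Q)) = 0) := by
  constructor
  · intro Q hQ h
    have hQs : star Q ∈ 𝒴 := star_mem hQ
    have key : ∀ Z ∈ 𝒴, φ (Z * Q) + φ (Z * star Q) = 0 := by
      intro Z hZ
      -- condition at star Z
      have h1 : φ (Z * X) - φ (Z * Q) + φ (X * Z) - φ (Q * Z) = 0 := by
        have h1' := h (star Z) (star_mem hZ)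
        simp only [symInner, star_star] at h1'
        have h1'' : φ (Z * (X - Q) + (X - Q) * Z) = 0 := by
          linear_combination 2 * h1'
        simp only [mul_sub, sub_mul, map_add, map_sub] at h1''
        linear_combination h1''
      -- conjugate of condition at Z
      have h2' := h Z hZ
      simp only [symInner] at h2'
      have h2 : φ (star Z * (X - Q) + (X - Q) * star Z) = 0 := by
        linear_combination 2 * h2'
      have h3 := hconj (star Z * (X - Q) + (X - Q) * star Z)
      rw [h2, map_zero] at h3
      simp only [star_add, star_mul, star_sub, star_star, hX] at h3
      -- h3 : φ ((-X - star Q) * Z + Z * (-X - star Q)) = 0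
      have h4 : - φ (X * Z) - φ (star Q * Z) - φ (Z * X) - φ (Z * star Q) = 0 := by
        simp only [sub_mul, mul_sub, neg_mul, mul_neg, map_add, map_sub, map_neg] at h3
        linear_combination h3
      have c1 : Q * Z = Z * Q := hcomm Q hQ Z hZ
      have c2 : star Q * Z = Z * star Q := hcomm _ hQs Z hZ
      rw [c1] at h1
      rw [c2] at h4
      linear_combination (-h1 - h4) / 2
    have hS : Q + star Q ∈ 𝒴 := 𝒴.add_mem hQ hQs
    have hfin := key (Q + star Q) hS
    have hstar : star (Q + star Q) = Q + star Q := by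
      simp [star_add, add_comm]
    rw [hstar, mul_add, map_add]
    linear_combination hfin
  · intro Q hQ h
    have hQs : star Q ∈ 𝒴 := star_mem hQ
    have key : ∀ Z ∈ 𝒴, φ (Q * Z) = φ (star Q * Z) := by
      intro Z hZ
      -- conjugate of condition at star Z
      have h1 := h (star Z) (star_mem hZ)
      have h2 := hconj (star Z * X - X * star Z)
      rw [h1] at h2
      simp only [star_sub, star_mul, star_star, hX] at h2
      -- h2 : φ (star X * Z - Z * star X) = conj (2 * φ (Q * star Z))
      have h3 : (starRingEnd ℂ) (2 * φ (Q * star Z)) = 2 * φ (star (Q * star Z)) := by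
        rw [map_mul, ← hconj, map_ofNat]
      rw [h3] at h2
      simp only [star_mul, star_star] at h2
      -- h2 : φ (-X * Z - Z * -X) = 2 * φ (Z * star Q)
      have h4 : φ (Z * X) - φ (X * Z) = 2 * φ (Z * star Q) := by
        simp only [neg_mul, mul_neg, map_sub, map_neg] at h2
        linear_combination h2
      have h5 := h Z hZ
      rw [map_sub] at h5
      have c1 : Z * star Q = star Q * Z := hcomm Z hZ _ hQs
      rw [c1] at h4
      linear_combination (h4 - h5) / 2
    have hD : Q - star Q ∈ 𝒴 := 𝒴.sub_mem hQ hQs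
    have hfin := key (Q - star Q) hD
    have hstar : star (Q - star Q) = -(Q - star Q) := by
      simp [star_sub]
    rw [hstar, neg_mul, map_neg, sub_mul]
    rw [map_sub]
    linear_combination -hfin
end

section
/- Orthogonality of the combined quantum least mean square estimate: if Q⁺ ∈ 𝒴 satisfies the symmetric orthogonal condition for X ∈ A and Q⁻ ∈ 𝒴 satisfies the skew orthogonal condition for X, then the combined estimate Q := Q⁺ + Q⁻ satisfies ⟨Z, X − Q⟩ = 0 for every Z ∈ 𝒴. -/
theorem combined_estimate_orthogonality
    {A : Type*} [Ring A] [StarRing A] [Algebra ℂ A] [StarModule ℂ A]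
    (φ : A →ₗ[ℂ] ℂ)
    (hφ1 : φ 1 = 1)
    (hpos : ∀ x : A, ∃ r : ℝ, 0 ≤ r ∧ φ (star x * x) = (r : ℂ))
    (hconj : ∀ x : A, φ (star x) = (starRingEnd ℂ) (φ x))
    (𝒴 : StarSubalgebra ℂ A)
    (hcomm : ∀ y ∈ 𝒴, ∀ z ∈ 𝒴, y * z = z * y)
    (X : A)
    (Qp : A) (hQp : Qp ∈ 𝒴)
    (hsym : ∀ Z ∈ 𝒴, symInner φ Z (X - Qp) = 0)
    (Qm : A) (hQm : Qm ∈ 𝒴)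
    (hskew : ∀ Z ∈ 𝒴, φ (Z * X - X * Z) = 2 * φ (Qm * Z)) :
    ∀ Z ∈ 𝒴, preInner φ Z (X - (Qp + Qm)) = 0 := by
  intro Z hZ
  have hW : star Z ∈ 𝒴 := star_mem hZ
  have h1 := hsym Z hZ
  have h2 := hskew (star Z) hW
  have hcp : φ (star Z * Qp) = φ (Qp * star Z) := congrArg φ (hcomm _ hW Qp hQp)
  have hcm : φ (star Z * Qm) = φ (Qm * star Z) := congrArg φ (hcomm _ hW Qm hQm)
  simp only [symInner, preInner, mul_sub, sub_mul, mul_add, add_mul, map_add, map_sub] at h1 h2 ⊢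
  linear_combination h1 + h2/2 - hcp/2 - hcm
end

section
/- Uniqueness of the mean non-commutativity (Proposition 1, part 2): if Y₃, Y₄ ∈ 𝒴 both satisfy the skew orthogonal condition for the same X ∈ A, then Y₃ = Y₄ φ-almost surely, i.e. φ(star(Y₃ − Y₄) · (Y₃ − Y₄)) = 0. -/
theorem uniqueness_skew_estimate
    {A : Type*} [Ring A] [StarRing A] [Algebra ℂ A] [StarModule ℂ A]
    (φ : A →ₗ[ℂ] ℂ)
    (hφ1 : φ 1 = 1)
    (hpos : ∀ x : A, ∃ r : ℝ, 0 ≤ r ∧ φ (star x * x) = (r : ℂ))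
    (hconj : ∀ x : A, φ (star x) = (starRingEnd ℂ) (φ x))
    (𝒴 : StarSubalgebra ℂ A)
    (hcomm : ∀ y ∈ 𝒴, ∀ z ∈ 𝒴, y * z = z * y)
    (X : A)
    (Y₃ Y₄ : A) (hY₃ : Y₃ ∈ 𝒴) (hY₄ : Y₄ ∈ 𝒴)
    (h₃ : ∀ Z ∈ 𝒴, φ (Z * X - X * Z) = 2 * φ (Y₃ * Z))
    (h₄ : ∀ Z ∈ 𝒴, φ (Z * X - X * Z) = 2 * φ (Y₄ * Z)) :
    φ (star (Y₃ - Y₄) * (Y₃ - Y₄)) = 0 := by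
  set D := Y₃ - Y₄ with hD
  have hDmem : D ∈ 𝒴 := sub_mem hY₃ hY₄
  have hsD : star D ∈ 𝒴 := star_mem hDmem
  have hzero : φ (D * star D) = 0 := by
    have h3 := h₃ (star D) hsD
    have h4 := h₄ (star D) hsD
    have : 2 * φ (Y₃ * star D) = 2 * φ (Y₄ * star D) := h3 ▸ h4
    have h2 : φ (Y₃ * star D) - φ (Y₄ * star D) = 0 := by
      have := mul_left_cancel₀ (two_ne_zero (α := ℂ)) this
      rw [this]; ring
    calc φ (D * star D) = φ (Y₃ * star D - Y₄ * star D) := by rw [hD, sub_mul]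
      _ = φ (Y₃ * star D) - φ (Y₄ * star D) := map_sub φ _ _
      _ = 0 := h2
  rw [hcomm (star D) hsD D hDmem, hzero]
end

section
/- Pythagoras identity for the combined estimate: if Q⁺ ∈ 𝒴 satisfies the symmetric orthogonal condition for X ∈ A, Q⁻ ∈ 𝒴 satisfies the skew orthogonal condition for X, and Q := Q⁺ + Q⁻, then for every Z ∈ 𝒴 one has ⟨X − Z, X − Z⟩ = ⟨X − Q, X − Q⟩ + ⟨Q − Z, Q − Z⟩. -/
theorem pythagoras_combined_estimate
    {A : Type*} [Ring A] [StarRing A] [Algebra ℂ A] [StarModule ℂ A]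
    (φ : A →ₗ[ℂ] ℂ)
    (hφ1 : φ 1 = 1)
    (hpos : ∀ x : A, ∃ r : ℝ, 0 ≤ r ∧ φ (star x * x) = (r : ℂ))
    (hconj : ∀ x : A, φ (star x) = (starRingEnd ℂ) (φ x))
    (𝒴 : StarSubalgebra ℂ A)
    (hcomm : ∀ y ∈ 𝒴, ∀ z ∈ 𝒴, y * z = z * y)
    (X : A)
    (Qp : A) (hQp : Qp ∈ 𝒴)
    (hsym : ∀ Z ∈ 𝒴, symInner φ Z (X - Qp) = 0)
    (Qm : A) (hQm : Qm ∈ 𝒴)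
    (hskew : ∀ Z ∈ 𝒴, φ (Z * X - X * Z) = 2 * φ (Qm * Z)) :
    ∀ Z ∈ 𝒴,
      preInner φ (X - Z) (X - Z)
        = preInner φ (X - (Qp + Qm)) (X - (Qp + Qm))
          + preInner φ ((Qp + Qm) - Z) ((Qp + Qm) - Z) := by
  intro Z hZ
  set Q : A := Qp + Qm with hQdef
  have hQ : Q ∈ 𝒴 := add_mem hQp hQm
  set Y : A := Q - Z with hYdef
  have hY : Y ∈ 𝒴 := sub_mem hQ hZ
  have hsY : star Y ∈ 𝒴 := star_mem hY
  -- symmetric condition at Y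
  have h1 : φ (star Y * (X - Qp) + (X - Qp) * star Y) = 0 := by
    have := hsym Y hY
    unfold symInner at this
    exact (mul_eq_zero.mp this).resolve_left (by norm_num)
  -- skew condition at star Y
  have h2 : φ (star Y * X - X * star Y) = 2 * φ (Qm * star Y) := hskew (star Y) hsY
  -- combine: φ (star Y * (X - Q)) = 0
  have hcross1 : φ (star Y * (X - Q)) = 0 := by
    have e1 : star Y * (X - Qp) + (X - Qp) * star Y
        = (star Y * X + X * star Y) - (star Y * Qp + Qp * star Y) := by noncomm_ring
    have e2 : star Y * Qp = Qp * star Y := hcomm _ hsY _ hQp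
    have e3 : star Y * Qm = Qm * star Y := hcomm _ hsY _ hQm
    have hsum : φ (star Y * X) + φ (X * star Y) = 2 * φ (Qp * star Y) := by
      have := h1
      rw [e1, map_sub, map_add, map_add, e2, sub_eq_zero] at this
      rw [this]; ring
    have hdiff : φ (star Y * X) - φ (X * star Y) = 2 * φ (Qm * star Y) := by
      rw [← map_sub]; exact h2
    have hx : φ (star Y * X) = φ (Qp * star Y) + φ (Qm * star Y) := by
      have := congrArg₂ (· + ·) hsum hdiff
      linear_combination this / 2
    have : star Y * (X - Q) = star Y * X - (Qp * star Y + Qm * star Y) := by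
      rw [hQdef]; rw [mul_sub, mul_add, e2, e3]
    rw [this, map_sub, map_add, hx]; ring
  have hcross2 : φ (star (X - Q) * Y) = 0 := by
    have : star (X - Q) * Y = star (star Y * (X - Q)) := by
      simp [star_mul]
    rw [this, hconj, hcross1, map_zero]
  -- expand
  have hXZ : X - Z = (X - Q) + Y := by rw [hYdef]; abel
  have expand : star (X - Z) * (X - Z)
      = star (X - Q) * (X - Q) + star Y * Y + (star (X - Q) * Y + star Y * (X - Q)) := by
    rw [hXZ, star_add]; noncomm_ring
  unfold preInner
  rw [expand, map_add, map_add, map_add, hcross1, hcross2]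
  ring
end

section
/- Least mean square optimality of the combined estimate (Proposition 2, part 1): if Q⁺ ∈ 𝒴 satisfies the symmetric orthogonal condition for X ∈ A, Q⁻ ∈ 𝒴 satisfies the skew orthogonal condition for X, and Q := Q⁺ + Q⁻, then for every Z ∈ 𝒴 the nonnegative real numbers φ(star(X − Q) · (X − Q)) and φ(star(X − Z) · (X − Z)) satisfy Re φ(star(X − Q) · (X − Q)) ≤ Re φ(star(X − Z) · (X − Z)). -/
theorem least_mean_square_optimality_combined
    {A : Type*} [Ring A] [StarRing A] [Algebra ℂ A] [StarModule ℂ A]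
    (φ : A →ₗ[ℂ] ℂ)
    (hφ1 : φ 1 = 1)
    (hpos : ∀ x : A, ∃ r : ℝ, 0 ≤ r ∧ φ (star x * x) = (r : ℂ))
    (hconj : ∀ x : A, φ (star x) = (starRingEnd ℂ) (φ x))
    (𝒴 : StarSubalgebra ℂ A)
    (hcomm : ∀ y ∈ 𝒴, ∀ z ∈ 𝒴, y * z = z * y)
    (X : A)
    (Qp : A) (hQp : Qp ∈ 𝒴)
    (hsym : ∀ Z ∈ 𝒴, symInner φ Z (X - Qp) = 0)
    (Qm : A) (hQm : Qm ∈ 𝒴)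
    (hskew : ∀ Z ∈ 𝒴, φ (Z * X - X * Z) = 2 * φ (Qm * Z)) :
    ∀ Z ∈ 𝒴,
      (φ (star (X - (Qp + Qm)) * (X - (Qp + Qm)))).re
        ≤ (φ (star (X - Z) * (X - Z))).re := by
  intro Z hZ
  have hQmem : Qp + Qm ∈ 𝒴 := add_mem hQp hQm
  -- key: the error is orthogonal (w.r.t. preInner) to every element of 𝒴
  have key : ∀ W, W ∈ 𝒴 → φ (star W * (X - (Qp + Qm))) = 0 := by
    intro W hW
    have hsW : star W ∈ 𝒴 := star_mem hW
    have h1 : Qp * star W = star W * Qp := hcomm _ hQp _ hsW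
    have h2 : Qm * star W = star W * Qm := hcomm _ hQm _ hsW
    have hs := hsym W hW
    unfold symInner at hs
    rw [mul_eq_zero] at hs
    have hs' : φ (star W * (X - Qp) + (X - Qp) * star W) = 0 :=
      hs.resolve_left (by norm_num)
    have hk := hskew (star W) hsW
    rw [h2] at hk
    have e1 : star W * (X - Qp) + (X - Qp) * star W
        = (star W * X - star W * Qp) + (X * star W - star W * Qp) := by
      rw [mul_sub, sub_mul, h1]
    rw [e1] at hs'
    have e2 : star W * (X - (Qp + Qm))
        = (star W * X - star W * Qp) - star W * Qm := by
      rw [mul_sub, mul_add, sub_sub]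
    rw [e2]
    simp only [map_sub, map_add] at hs' hk ⊢
    linear_combination (hs' + hk) / 2
  have key2 : ∀ W, W ∈ 𝒴 → φ (star (X - (Qp + Qm)) * W) = 0 := by
    intro W hW
    have h := hconj (star W * (X - (Qp + Qm)))
    rw [key W hW, star_mul, star_star, map_zero] at h
    exact h
  have hWmem : Qp + Qm - Z ∈ 𝒴 := sub_mem hQmem hZ
  have hXZ : X - Z = (X - (Qp + Qm)) + (Qp + Qm - Z) := by abel
  have expand : star (X - Z) * (X - Z)
      = star (X - (Qp + Qm)) * (X - (Qp + Qm))
        + star (X - (Qp + Qm)) * (Qp + Qm - Z)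
        + star (Qp + Qm - Z) * (X - (Qp + Qm))
        + star (Qp + Qm - Z) * (Qp + Qm - Z) := by
    rw [hXZ, star_add]
    noncomm_ring
  rw [expand]
  simp only [map_add, key _ hWmem, key2 _ hWmem, add_zero]
  obtain ⟨r, hr0, hr⟩ := hpos (Qp + Qm - Z)
  rw [hr]
  simp only [Complex.add_re, Complex.ofReal_re]
  linarith
end

section
/- Least mean square optimality of the symmetric estimate (Proposition 2, part 2): if Q⁺ ∈ 𝒴 satisfies the symmetric orthogonal condition for X ∈ A, then for every Z ∈ 𝒴 the nonnegative real numbers ⟨⟨X − Q⁺, X − Q⁺⟩⟩ and ⟨⟨X − Z, X − Z⟩⟩ satisfy Re ⟨⟨X − Q⁺, X − Q⁺⟩⟩ ≤ Re ⟨⟨X − Z, X − Z⟩⟩. -/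
theorem least_mean_square_optimality_symmetric
    {A : Type*} [Ring A] [StarRing A] [Algebra ℂ A] [StarModule ℂ A]
    (φ : A →ₗ[ℂ] ℂ)
    (hφ1 : φ 1 = 1)
    (hpos : ∀ x : A, ∃ r : ℝ, 0 ≤ r ∧ φ (star x * x) = (r : ℂ))
    (hconj : ∀ x : A, φ (star x) = (starRingEnd ℂ) (φ x))
    (𝒴 : StarSubalgebra ℂ A)
    (hcomm : ∀ y ∈ 𝒴, ∀ z ∈ 𝒴, y * z = z * y)
    (X : A)
    (Qp : A) (hQp : Qp ∈ 𝒴)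
    (hsym : ∀ Z ∈ 𝒴, symInner φ Z (X - Qp) = 0) :
    ∀ Z ∈ 𝒴,
      (symInner φ (X - Qp) (X - Qp)).re ≤ (symInner φ (X - Z) (X - Z)).re := by
  intro Z hZ
  set E := X - Qp with hE
  set D := Qp - Z with hD
  have hDmem : D ∈ 𝒴 := sub_mem hQp hZ
  have hswap : ∀ U V : A, symInner φ V U = (starRingEnd ℂ) (symInner φ U V) := by
    intro U V
    have h : star (star U * V + V * star U) = star V * U + U * star V := by
      simp [star_add, star_mul, add_comm]
    calc symInner φ V U = (1/2) * φ (star (star U * V + V * star U)) := by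
          rw [h, symInner]
      _ = (starRingEnd ℂ) (symInner φ U V) := by
          rw [hconj, symInner, map_mul, map_add]
          simp [map_ofNat]
  have hDE : symInner φ D E = 0 := hsym D hDmem
  have hED : symInner φ E D = 0 := by rw [hswap D E, hDE, map_zero]
  have addL : ∀ U V W : A, symInner φ (U + V) W = symInner φ U W + symInner φ V W := by
    intro U V W
    simp only [symInner, star_add, add_mul, mul_add, map_add]
    ring
  have addR : ∀ U V W : A, symInner φ U (V + W) = symInner φ U V + symInner φ U W := by
    intro U V W
    simp only [symInner, star_add, add_mul, mul_add, map_add]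
    ring
  have hXZ : X - Z = E + D := (sub_add_sub_cancel X Qp Z).symm
  have hexp : symInner φ (X - Z) (X - Z)
      = symInner φ E E + symInner φ E D + symInner φ D E + symInner φ D D := by
    rw [hXZ, addL, addR, addR]; ring
  have hstarD : star D ∈ 𝒴 := star_mem hDmem
  have hDD : symInner φ D D = φ (star D * D) := by
    rw [symInner, hcomm D hDmem (star D) hstarD, map_add]; ring
  obtain ⟨r, hr0, hr⟩ := hpos D
  rw [hexp, hED, hDE, hDD, hr]
  simp [hr0]
end

section
/- Monotonicity of the symmetric estimation error under enlargement of the observation algebra (Corollary, part 1): let 𝒴₁ ⊆ 𝒴₂ be commutative unital star-subalgebras of A, let X ∈ A be self-adjoint (star(X) = X), and suppose Q₁ ∈ 𝒴₁ satisfies the symmetric orthogonal condition for X with respect to 𝒴₁ and Q₂ ∈ 𝒴₂ satisfies the symmetric orthogonal condition for X with respect to 𝒴₂. Then Re φ(star(X − Q₂) · (X − Q₂)) ≤ Re φ(star(X − Q₁) · (X − Q₁)). -/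
/-- If `symInner φ X Y = 0` then `φ (star X * Y + Y * star X) = 0`. -/
lemma symInner_eq_zero_iff {A : Type*} [Ring A] [StarRing A] [Algebra ℂ A]
    (φ : A →ₗ[ℂ] ℂ) (X Y : A) (h : symInner φ X Y = 0) :
    φ (star X * Y + Y * star X) = 0 := by
  unfold symInner at h
  have h12 : (1/2 : ℂ) ≠ 0 := by norm_num
  exact (mul_eq_zero.mp h).resolve_left h12

/-- Cauchy–Schwarz null lemma for a positive functional: if `φ(y* y) = 0`
then `φ(x* y) = 0` for every `x`. -/
lemma cs_null {A : Type*} [Ring A] [StarRing A] [Algebra ℂ A] [StarModule ℂ A]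
    (φ : A →ₗ[ℂ] ℂ)
    (hpos : ∀ x : A, ∃ r : ℝ, 0 ≤ r ∧ φ (star x * x) = (r : ℂ))
    (hconj : ∀ x : A, φ (star x) = (starRingEnd ℂ) (φ x))
    (x y : A) (hy : φ (star y * y) = 0) :
    φ (star x * y) = 0 := by
  by_contra hp
  set p := φ (star x * y) with hpdef
  obtain ⟨R, hR0, hRx⟩ := hpos x
  have hyx : φ (star y * x) = starRingEnd ℂ p := by
    have h1 : star y * x = star (star x * y) := by simp [star_mul]
    rw [h1, hconj]
  have hNpos : 0 < Complex.normSq p := Complex.normSq_pos.mpr hp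
  set N : ℝ := Complex.normSq p with hN
  set t : ℝ := (R + 1) / (2 * N) with ht
  set c : ℂ := -(t : ℂ) * starRingEnd ℂ p with hc
  obtain ⟨r, hr0, hrr⟩ := hpos (x + c • y)
  have expand : star (x + c • y) * (x + c • y)
      = star x * x + c • (star x * y) + (starRingEnd ℂ c) • (star y * x)
        + (starRingEnd ℂ c * c) • (star y * y) := by
    rw [star_add, star_smul, starRingEnd_apply]
    simp only [add_mul, mul_add, smul_mul_assoc, mul_smul_comm, smul_smul, smul_add]
    rw [mul_comm c (star c)]
    abel
  have h1 : (starRingEnd ℂ) p * p = (N : ℂ) := by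
    rw [hN]; push_cast [Complex.normSq_eq_conj_mul_self]; ring
  have h2 : p * (starRingEnd ℂ) p = (N : ℂ) := by rw [mul_comm]; exact h1
  have hcp : (starRingEnd ℂ) c = -(t : ℂ) * p := by
    rw [hc]; simp [Complex.conj_ofReal]
  have val : φ (star (x + c • y) * (x + c • y)) = (R : ℂ) - 2 * (t : ℂ) * (N : ℂ) := by
    rw [expand]
    simp only [map_add, map_smul, smul_eq_mul, hy, hRx, hyx, ← hpdef, mul_zero, add_zero]
    rw [hcp, hc]
    linear_combination (-(t : ℂ)) * h1 - (t : ℂ) * h2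
  have hre : r = R - 2 * t * N := by
    have := hrr.symm.trans val
    exact_mod_cast this
  rw [ht] at hre
  have hNne : N ≠ 0 := ne_of_gt hNpos
  have hkey : 2 * ((R + 1) / (2 * N)) * N = R + 1 := by field_simp
  rw [hkey] at hre
  linarith

/-- Under the symmetric orthogonality condition, the estimation error equals
the symmetric estimation error. -/
lemma error_eq_sym {A : Type*} [Ring A] [StarRing A] [Algebra ℂ A] [StarModule ℂ A]
    (φ : A →ₗ[ℂ] ℂ)
    (hpos : ∀ x : A, ∃ r : ℝ, 0 ≤ r ∧ φ (star x * x) = (r : ℂ))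
    (hconj : ∀ x : A, φ (star x) = (starRingEnd ℂ) (φ x))
    (𝒴 : StarSubalgebra ℂ A)
    (hcomm : ∀ y ∈ 𝒴, ∀ z ∈ 𝒴, y * z = z * y)
    (X : A) (hX : star X = X) (Q : A) (hQ : Q ∈ 𝒴)
    (h : ∀ Z ∈ 𝒴, symInner φ Z (X - Q) = 0) :
    φ (star (X - Q) * (X - Q)) = symInner φ (X - Q) (X - Q) := by
  have horth : ∀ Z ∈ 𝒴, φ (star Z * (X - Q) + (X - Q) * star Z) = 0 :=
    fun Z hZ => symInner_eq_zero_iff φ Z (X - Q) (h Z hZ)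
  have horth' : ∀ Z ∈ 𝒴, φ ((X - star Q) * Z + Z * (X - star Q)) = 0 := by
    intro Z hZ
    have h0 := horth Z hZ
    have hstar : star (star Z * (X - Q) + (X - Q) * star Z)
        = (X - star Q) * Z + Z * (X - star Q) := by
      rw [star_add, star_mul, star_mul, star_star, star_sub, hX]
    have : φ ((X - star Q) * Z + Z * (X - star Q))
        = starRingEnd ℂ (φ (star Z * (X - Q) + (X - Q) * star Z)) := by
      rw [← hstar, hconj]
    rw [this, h0, map_zero]
  set S : A := star Q - Q with hS
  have hSmem : S ∈ 𝒴 := sub_mem (star_mem hQ) hQ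
  have hZS : ∀ Z ∈ 𝒴, φ (Z * S) = 0 := by
    intro Z hZ
    have e1 := horth (star Z) (star_mem hZ)
    rw [star_star] at e1
    have e2 := horth' Z hZ
    have key : Z * S + S * Z
        = (Z * (X - Q) + (X - Q) * Z) - ((X - star Q) * Z + Z * (X - star Q)) := by
      rw [hS]; noncomm_ring
    have hcz : S * Z = Z * S := hcomm S hSmem Z hZ
    have h0 : φ (Z * S + S * Z) = 0 := by
      rw [key, map_sub, e1, e2, sub_zero]
    rw [map_add, hcz] at h0
    exact add_self_eq_zero.mp h0
  have hSS : φ (star S * S) = 0 := hZS (star S) (star_mem hSmem)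
  have hxS : ∀ z : A, φ (z * S) = 0 := by
    intro z
    have := cs_null φ hpos hconj (star z) S hSS
    rwa [star_star] at this
  have hSstar : star S = -S := by rw [hS, star_sub, star_star, neg_sub]
  have hSy : ∀ z : A, φ (S * z) = 0 := by
    intro z
    have h0 : φ (star (S * z)) = 0 := by
      rw [star_mul, hSstar, mul_neg, map_neg, hxS (star z), neg_zero]
    rw [hconj] at h0
    simpa using h0
  have hQQ : star Q * Q = Q * star Q := hcomm _ (star_mem hQ) _ hQ
  have keyE : (X - Q) * star (X - Q) = star (X - Q) * (X - Q) - (X * S - S * X) := by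
    rw [star_sub, hX, hS]
    rw [show (X - Q) * (X - star Q) = X*X - X*(star Q) - Q*X + Q*(star Q) by noncomm_ring,
        show (X - star Q) * (X - Q) - (X * (star Q - Q) - (star Q - Q) * X)
          = X*X - X*(star Q) - Q*X + (star Q)*Q by noncomm_ring, hQQ]
  have hE2 : φ ((X - Q) * star (X - Q)) = φ (star (X - Q) * (X - Q)) := by
    rw [keyE, map_sub, map_sub, hxS X, hSy X]
    simp
  unfold symInner
  rw [map_add, hE2]
  ring

theorem monotonicity_symmetric_error
    {A : Type*} [Ring A] [StarRing A] [Algebra ℂ A] [StarModule ℂ A]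
    (φ : A →ₗ[ℂ] ℂ)
    (hφ1 : φ 1 = 1)
    (hpos : ∀ x : A, ∃ r : ℝ, 0 ≤ r ∧ φ (star x * x) = (r : ℂ))
    (hconj : ∀ x : A, φ (star x) = (starRingEnd ℂ) (φ x))
    (𝒴₁ 𝒴₂ : StarSubalgebra ℂ A)
    (hcomm₁ : ∀ y ∈ 𝒴₁, ∀ z ∈ 𝒴₁, y * z = z * y)
    (hcomm₂ : ∀ y ∈ 𝒴₂, ∀ z ∈ 𝒴₂, y * z = z * y)
    (hle : 𝒴₁ ≤ 𝒴₂)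
    (X : A) (hX : star X = X)
    (Q₁ : A) (hQ₁ : Q₁ ∈ 𝒴₁)
    (h₁ : ∀ Z ∈ 𝒴₁, symInner φ Z (X - Q₁) = 0)
    (Q₂ : A) (hQ₂ : Q₂ ∈ 𝒴₂)
    (h₂ : ∀ Z ∈ 𝒴₂, symInner φ Z (X - Q₂) = 0) :
    (φ (star (X - Q₂) * (X - Q₂))).re ≤ (φ (star (X - Q₁) * (X - Q₁))).re := by
  have hQ₁2 : Q₁ ∈ 𝒴₂ := hle hQ₁
  have hD : Q₂ - Q₁ ∈ 𝒴₂ := sub_mem hQ₂ hQ₁2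
  have he₁ := error_eq_sym φ hpos hconj 𝒴₁ hcomm₁ X hX Q₁ hQ₁ h₁
  have he₂ := error_eq_sym φ hpos hconj 𝒴₂ hcomm₂ X hX Q₂ hQ₂ h₂
  have hDE : symInner φ (Q₂ - Q₁) (X - Q₂) = 0 := h₂ _ hD
  have hED : symInner φ (X - Q₂) (Q₂ - Q₁) = 0 := by
    have hconv : symInner φ (X - Q₂) (Q₂ - Q₁)
        = starRingEnd ℂ (symInner φ (Q₂ - Q₁) (X - Q₂)) := by
      unfold symInner
      rw [map_mul, ← hconj]
      congr 1
      · simp [map_ofNat]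
      · rw [star_add, star_mul, star_mul, star_star]
    rw [hconv, hDE, map_zero]
  have hsplit : X - Q₁ = (X - Q₂) + (Q₂ - Q₁) := by abel
  have hPyth : symInner φ ((X - Q₂) + (Q₂ - Q₁)) ((X - Q₂) + (Q₂ - Q₁))
      = symInner φ (X - Q₂) (X - Q₂) + symInner φ (Q₂ - Q₁) (Q₂ - Q₁) := by
    unfold symInner
    rw [star_add]
    rw [show (star (X - Q₂) + star (Q₂ - Q₁)) * ((X - Q₂) + (Q₂ - Q₁))
          + ((X - Q₂) + (Q₂ - Q₁)) * (star (X - Q₂) + star (Q₂ - Q₁))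
        = (star (X - Q₂) * (X - Q₂) + (X - Q₂) * star (X - Q₂))
          + (star (Q₂ - Q₁) * (X - Q₂) + (X - Q₂) * star (Q₂ - Q₁))
          + (star (X - Q₂) * (Q₂ - Q₁) + (Q₂ - Q₁) * star (X - Q₂))
          + (star (Q₂ - Q₁) * (Q₂ - Q₁) + (Q₂ - Q₁) * star (Q₂ - Q₁)) by noncomm_ring]
    rw [map_add, map_add, map_add,
      symInner_eq_zero_iff φ _ _ hDE, symInner_eq_zero_iff φ _ _ hED]
    ring
  have hDD : 0 ≤ (symInner φ (Q₂ - Q₁) (Q₂ - Q₁)).re := by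
    obtain ⟨r, hr0, hrr⟩ := hpos (Q₂ - Q₁)
    obtain ⟨s, hs0, hss⟩ := hpos (star (Q₂ - Q₁))
    rw [star_star] at hss
    have hval : symInner φ (Q₂ - Q₁) (Q₂ - Q₁) = (((r + s) / 2 : ℝ) : ℂ) := by
      unfold symInner
      rw [map_add, hrr, hss]
      push_cast
      ring
    rw [hval, Complex.ofReal_re]
    positivity
  rw [he₁, he₂, hsplit, hPyth, Complex.add_re]
  linarith
end

section
/- Monotonicity of the skew estimation error under enlargement of the observation algebra (Corollary, part 2): let 𝒴₁ ⊆ 𝒴₂ be commutative unital star-subalgebras of A, let X ∈ A be self-adjoint (star(X) = X), and suppose Q₁ ∈ 𝒴₁ satisfies the skew orthogonal condition for X with respect to 𝒴₁ and Q₂ ∈ 𝒴₂ satisfies the skew orthogonal condition for X with respect to 𝒴₂, with star(Q₁) = −Q₁ and star(Q₂) = −Q₂. Then Re φ(star(X − Q₂) · (X − Q₂)) ≤ Re φ(star(X − Q₁) · (X − Q₁)). -/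
theorem monotonicity_skew_error
    {A : Type*} [Ring A] [StarRing A] [Algebra ℂ A] [StarModule ℂ A]
    (φ : A →ₗ[ℂ] ℂ)
    (hφ1 : φ 1 = 1)
    (hpos : ∀ x : A, ∃ r : ℝ, 0 ≤ r ∧ φ (star x * x) = (r : ℂ))
    (hconj : ∀ x : A, φ (star x) = (starRingEnd ℂ) (φ x))
    (𝒴₁ 𝒴₂ : StarSubalgebra ℂ A)
    (hcomm₁ : ∀ y ∈ 𝒴₁, ∀ z ∈ 𝒴₁, y * z = z * y)
    (hcomm₂ : ∀ y ∈ 𝒴₂, ∀ z ∈ 𝒴₂, y * z = z * y)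
    (hle : 𝒴₁ ≤ 𝒴₂)
    (X : A) (hX : star X = X)
    (Q₁ : A) (hQ₁ : Q₁ ∈ 𝒴₁) (hQ₁skew : star Q₁ = -Q₁)
    (h₁ : ∀ Z ∈ 𝒴₁, φ (Z * X - X * Z) = 2 * φ (Q₁ * Z))
    (Q₂ : A) (hQ₂ : Q₂ ∈ 𝒴₂) (hQ₂skew : star Q₂ = -Q₂)
    (h₂ : ∀ Z ∈ 𝒴₂, φ (Z * X - X * Z) = 2 * φ (Q₂ * Z)) :
    (φ (star (X - Q₂) * (X - Q₂))).re ≤ (φ (star (X - Q₁) * (X - Q₁))).re := by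

  obtain ⟨r₁, hr₁0, hr₁⟩ := hpos Q₁
  obtain ⟨r₂, hr₂0, hr₂⟩ := hpos Q₂
  obtain ⟨s, hs0, hs⟩ := hpos (Q₂ - Q₁)
  -- φ (Q₁ * Q₁) = -r₁, φ (Q₂ * Q₂) = -r₂
  have hQQ1 : φ (Q₁ * Q₁) = -(r₁ : ℂ) := by
    have h := hr₁; rw [hQ₁skew, neg_mul, map_neg] at h; linear_combination -h
  have hQQ2 : φ (Q₂ * Q₂) = -(r₂ : ℂ) := by
    have h := hr₂; rw [hQ₂skew, neg_mul, map_neg] at h; linear_combination -h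
  -- φ (Q₂ * Q₁) = φ (Q₁ * Q₁)
  have h21 : φ (Q₂ * Q₁) = -(r₁ : ℂ) := by
    have a := h₁ Q₁ hQ₁
    have b := h₂ Q₁ (hle hQ₁)
    have h2 : (2:ℂ) ≠ 0 := two_ne_zero
    have : 2 * φ (Q₂ * Q₁) = 2 * φ (Q₁ * Q₁) := by rw [← b, ← a]
    have := mul_left_cancel₀ h2 this
    rw [this, hQQ1]
  have hs21 : φ (star Q₂ * Q₁) = (r₁ : ℂ) := by
    rw [hQ₂skew, neg_mul, map_neg, h21, neg_neg]
  have hs12 : φ (star Q₁ * Q₂) = (r₁ : ℂ) := by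
    have h := hconj (star Q₂ * Q₁)
    rw [star_mul, star_star] at h
    rw [h, hs21, Complex.conj_ofReal]
  -- s = r₂ - r₁
  have hsval : (s : ℂ) = (r₂ : ℂ) - r₁ := by
    have hexp : star (Q₂ - Q₁) * (Q₂ - Q₁)
        = star Q₂ * Q₂ - star Q₂ * Q₁ - (star Q₁ * Q₂ - star Q₁ * Q₁) := by
      rw [star_sub]; noncomm_ring
    rw [hexp] at hs
    rw [map_sub, map_sub, map_sub, hr₁, hr₂, hs21, hs12] at hs
    rw [← hs]; ring
  have hrle : r₁ ≤ r₂ := by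
    have : s = r₂ - r₁ := by exact_mod_cast hsval
    linarith
  have key : ∀ (Q : A) (r : ℝ), star Q = -Q → φ (Q * X - X * Q) = 2 * φ (Q * Q) →
      φ (Q * Q) = -(r : ℂ) → φ (star (X - Q) * (X - Q)) = φ (X * X) - (r : ℂ) := by
    intro Q r hQskew hcond hQQ
    have hst : star (X - Q) = X + Q := by rw [star_sub, hX, hQskew, sub_neg_eq_add]
    have hexp : (X + Q) * (X - Q) = X * X - (X * Q - Q * X) - Q * Q := by noncomm_ring
    rw [hst, hexp, map_sub, map_sub]
    have hxq : φ (X * Q - Q * X) = -(2 * φ (Q * Q)) := by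
      rw [← hcond, map_sub, map_sub]; ring
    rw [hxq, hQQ]; ring
  have e1 := key Q₁ r₁ hQ₁skew (h₁ Q₁ hQ₁) hQQ1
  have e2 := key Q₂ r₂ hQ₂skew (h₂ Q₂ hQ₂) hQQ2
  rw [e1, e2]; simp only [Complex.sub_re, Complex.ofReal_re]
  linarith
end

section
/- Monotonicity of the combined estimation error under enlargement of the observation algebra (Corollary, part 3): let 𝒴₁ ⊆ 𝒴₂ be commutative unital star-subalgebras of A and let X ∈ A be self-adjoint (star(X) = X). For i = 1, 2, suppose Qᵢ⁺ ∈ 𝒴ᵢ satisfies the symmetric orthogonal condition for X with respect to 𝒴ᵢ, Qᵢ⁻ ∈ 𝒴ᵢ satisfies the skew orthogonal condition for X with respect to 𝒴ᵢ, and set Qᵢ := Qᵢ⁺ + Qᵢ⁻. Then Re φ(star(X − Q₂) · (X − Q₂)) ≤ Re φ(star(X − Q₁) · (X − Q₁)). -/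
theorem monotonicity_combined_error
    {A : Type*} [Ring A] [StarRing A] [Algebra ℂ A] [StarModule ℂ A]
    (φ : A →ₗ[ℂ] ℂ)
    (hφ1 : φ 1 = 1)
    (hpos : ∀ x : A, ∃ r : ℝ, 0 ≤ r ∧ φ (star x * x) = (r : ℂ))
    (hconj : ∀ x : A, φ (star x) = (starRingEnd ℂ) (φ x))
    (𝒴₁ 𝒴₂ : StarSubalgebra ℂ A)
    (hcomm₁ : ∀ y ∈ 𝒴₁, ∀ z ∈ 𝒴₁, y * z = z * y)
    (hcomm₂ : ∀ y ∈ 𝒴₂, ∀ z ∈ 𝒴₂, y * z = z * y)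
    (hle : 𝒴₁ ≤ 𝒴₂)
    (X : A) (hX : star X = X)
    (Q₁p : A) (hQ₁p : Q₁p ∈ 𝒴₁)
    (h₁p : ∀ Z ∈ 𝒴₁, symInner φ Z (X - Q₁p) = 0)
    (Q₁m : A) (hQ₁m : Q₁m ∈ 𝒴₁)
    (h₁m : ∀ Z ∈ 𝒴₁, φ (Z * X - X * Z) = 2 * φ (Q₁m * Z))
    (Q₂p : A) (hQ₂p : Q₂p ∈ 𝒴₂)
    (h₂p : ∀ Z ∈ 𝒴₂, symInner φ Z (X - Q₂p) = 0)
    (Q₂m : A) (hQ₂m : Q₂m ∈ 𝒴₂)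
    (h₂m : ∀ Z ∈ 𝒴₂, φ (Z * X - X * Z) = 2 * φ (Q₂m * Z)) :
    (φ (star (X - (Q₂p + Q₂m)) * (X - (Q₂p + Q₂m)))).re
      ≤ (φ (star (X - (Q₁p + Q₁m)) * (X - (Q₁p + Q₁m)))).re := by
  -- conj of φ
  have hconj2 : ∀ u : A, (starRingEnd ℂ) (φ u) = φ (star u) := by
    intro u
    have h := hconj (star u)
    rw [star_star] at h
    rw [h, Complex.conj_conj]
  -- symmetric condition, rewritten
  have h1 : ∀ Z ∈ 𝒴₂, φ (Z * X) + φ (X * Z) = 2 * φ (Q₂p * Z) := by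
    intro Z hZ
    have h := h₂p (star Z) (star_mem hZ)
    unfold symInner at h
    rw [star_star] at h
    have hexp : Z * (X - Q₂p) + (X - Q₂p) * Z
        = (Z * X + X * Z) - (Z * Q₂p + Q₂p * Z) := by noncomm_ring
    rw [hexp, map_sub, map_add, map_add] at h
    have hc : φ (Z * Q₂p) = φ (Q₂p * Z) := by rw [hcomm₂ Z hZ Q₂p hQ₂p]
    linear_combination 2 * h + hc
  -- skew condition, rewritten
  have h2 : ∀ Z ∈ 𝒴₂, φ (Z * X) - φ (X * Z) = 2 * φ (Q₂m * Z) := by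
    intro Z hZ
    have h := h₂m Z hZ
    rw [map_sub] at h
    exact h
  have hXZ : ∀ Z ∈ 𝒴₂, φ (X * Z) = φ (Q₂p * Z) - φ (Q₂m * Z) := by
    intro Z hZ
    linear_combination (h1 Z hZ - h2 Z hZ) / 2
  have hZX : ∀ Z ∈ 𝒴₂, φ (Z * X) = φ (Q₂p * Z) + φ (Q₂m * Z) := by
    intro Z hZ
    linear_combination (h1 Z hZ + h2 Z hZ) / 2
  have hPstar : ∀ Z ∈ 𝒴₂, φ (star Q₂p * Z) = φ (Q₂p * Z) := by
    intro Z hZ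
    have e := h1 (star Z) (star_mem hZ)
    have e' := congrArg (starRingEnd ℂ) e
    simp only [map_add, map_mul, map_ofNat, hconj2, star_mul, star_star, hX] at e'
    -- e' : φ (X * Z) + φ (Z * X) = 2 * φ (Z * star Q₂p)
    have c : φ (star Q₂p * Z) = φ (Z * star Q₂p) := by
      rw [hcomm₂ _ (star_mem hQ₂p) Z hZ]
    have e2 := h1 Z hZ
    linear_combination c - e' / 2 + e2 / 2
  have hMstar : ∀ Z ∈ 𝒴₂, φ (star Q₂m * Z) = - φ (Q₂m * Z) := by
    intro Z hZ
    have e := h2 (star Z) (star_mem hZ)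
    have e' := congrArg (starRingEnd ℂ) e
    simp only [map_sub, map_mul, map_ofNat, hconj2, star_mul, star_star, hX] at e'
    -- e' : φ (X * Z) - φ (Z * X) = 2 * φ (Z * star Q₂m)
    have c : φ (star Q₂m * Z) = φ (Z * star Q₂m) := by
      rw [hcomm₂ _ (star_mem hQ₂m) Z hZ]
    have e2 := h2 Z hZ
    linear_combination c - e' / 2 - e2 / 2
  -- orthogonality of the residual against 𝒴₂
  have hT : ∀ Z ∈ 𝒴₂,
      φ ((X - star Q₂p - star Q₂m) * Z + star Z * (X - Q₂p - Q₂m)) = 0 := by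
    intro Z hZ
    have hsZ : star Z ∈ 𝒴₂ := star_mem hZ
    have e1 := hXZ Z hZ
    have e2 := hZX (star Z) hsZ
    have e3 : φ (star Z * Q₂p) = φ (Q₂p * star Z) := by
      rw [hcomm₂ _ hsZ _ hQ₂p]
    have e4 : φ (star Z * Q₂m) = φ (Q₂m * star Z) := by
      rw [hcomm₂ _ hsZ _ hQ₂m]
    have e5 := hPstar Z hZ
    have e6 := hMstar Z hZ
    have hexp : (X - star Q₂p - star Q₂m) * Z + star Z * (X - Q₂p - Q₂m)
        = (X * Z - star Q₂p * Z - star Q₂m * Z)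
          + (star Z * X - star Z * Q₂p - star Z * Q₂m) := by noncomm_ring
    rw [hexp, map_add, map_sub, map_sub, map_sub, map_sub]
    linear_combination e1 + e2 - e3 - e4 - e5 - e6
  set D : A := (Q₁p + Q₁m) - (Q₂p + Q₂m) with hD
  have hDmem : D ∈ 𝒴₂ := sub_mem (add_mem (hle hQ₁p) (hle hQ₁m)) (add_mem hQ₂p hQ₂m)
  have hTD := hT D hDmem
  have hring : star (X - (Q₁p + Q₁m)) * (X - (Q₁p + Q₁m))
      = star (X - (Q₂p + Q₂m)) * (X - (Q₂p + Q₂m))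
        - ((X - star Q₂p - star Q₂m) * D + star D * (X - Q₂p - Q₂m))
        + star D * D := by
    rw [hD]
    simp only [star_sub, star_add, hX]
    noncomm_ring
  have hkey : φ (star (X - (Q₁p + Q₁m)) * (X - (Q₁p + Q₁m)))
      = φ (star (X - (Q₂p + Q₂m)) * (X - (Q₂p + Q₂m))) + φ (star D * D) := by
    rw [hring, map_add, map_sub, hTD]
    ring
  obtain ⟨r, hr0, hr⟩ := hpos D
  rw [hkey, hr, Complex.add_re, Complex.ofReal_re]
  linarith
end

section
/- Consistency with the quantum conditional expectation: suppose X ∈ A commutes with every element of 𝒴 (X is in the commutant of 𝒴) and Q ∈ 𝒴 is a version of the quantum conditional expectation of X given 𝒴, i.e. ⟨Z, X − Q⟩ = 0 for all Z ∈ 𝒴. Then Q also satisfies the symmetric orthogonal condition for X (⟨⟨Z, X − Q⟩⟩ = 0 for all Z ∈ 𝒴), and the zero element satisfies the skew orthogonal condition for X (φ(Z·X − X·Z) = 0 for all Z ∈ 𝒴); hence for such X the symmetric quantum least mean square estimate coincides with the quantum conditional expectation and the mean non-commutativity vanishes φ-almost surely. -/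
theorem consistency_with_conditional_expectation
    {A : Type*} [Ring A] [StarRing A] [Algebra ℂ A] [StarModule ℂ A]
    (φ : A →ₗ[ℂ] ℂ)
    (hφ1 : φ 1 = 1)
    (hpos : ∀ x : A, ∃ r : ℝ, 0 ≤ r ∧ φ (star x * x) = (r : ℂ))
    (hconj : ∀ x : A, φ (star x) = (starRingEnd ℂ) (φ x))
    (𝒴 : StarSubalgebra ℂ A)
    (hcomm : ∀ y ∈ 𝒴, ∀ z ∈ 𝒴, y * z = z * y)
    (X : A) (hXcomm : ∀ y ∈ 𝒴, X * y = y * X)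
    (Q : A) (hQ : Q ∈ 𝒴)
    (hce : ∀ Z ∈ 𝒴, preInner φ Z (X - Q) = 0) :
    (∀ Z ∈ 𝒴, symInner φ Z (X - Q) = 0) ∧
    (∀ Z ∈ 𝒴, φ (Z * X - X * Z) = 2 * φ ((0 : A) * Z)) := by
  constructor
  · intro Z hZ
    have hsZ : star Z ∈ 𝒴 := star_mem hZ
    have hswap : (X - Q) * star Z = star Z * (X - Q) := by
      rw [sub_mul, mul_sub, hXcomm _ hsZ, hcomm Q hQ _ hsZ]
    have := hce Z hZ
    unfold preInner at this
    unfold symInner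
    rw [hswap, map_add, this]
    ring
  · intro Z hZ
    rw [hXcomm Z hZ, sub_self, zero_mul, map_zero, mul_zero]
end
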